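/- Let n ≥ 2 and δ ≥ 4 ln n. Let a, b ∈ ℝ^n satisfy: a_1 > a_2 > ⋯ > a_n and b_1 > b_2 > ⋯ > b_n; a_i − a_j > δ and b_i − b_j > δ for all 1 ≤ i < j ≤ n; |a_i − b_j| > δ for all i, j ∈ [n] with a_i ≠ b_j; and a_1 > b_1. Then Boltz(a) − Boltz(b) > (ln n)² · e^{−(a_1 − b_1)}. -/

import Mathlib

/-- The softmax of a vector `z ∈ ℝⁿ`: `softmax(z)_i = exp(z_i) / ∑_j exp(z_j)`. -/
noncomputable def softmaxVec {n : ℕ} (z : Fin n → ℝ) : Fin n → ℝ :=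
  fun i => Real.exp (z i) / ∑ j, Real.exp (z j)

/-- The Boltzmann operator `Boltz(z) = ∑_i z_i · softmax(z)_i`. -/
noncomputable def boltz {n : ℕ} (z : Fin n → ℝ) : ℝ :=
  ∑ i, z i * softmaxVec z i

/-!
Since `b` is decreasing, `Boltz(b) ≤ b₁`. Since the gaps of `a` exceed `δ ≥ 1` and `t ↦ t e^{-t}`
decreases on `[1, ∞)`, each non-leading term of `a₁ - Boltz(a) = ∑ᵢ (a₁ - aᵢ) softmax(a)ᵢ` is at most
`δ e^{-δ}`, so `Boltz(a) ≥ a₁ - (n - 1) δ e^{-δ}`. Hence `Boltz(a) - Boltz(b) ≥ T - (n - 1) δ e^{-δ}`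
with `T = a₁ - b₁ > δ`, and `e^{-δ} ≤ n⁻⁴` makes both `(n - 1) δ e^{-δ}` and `(ln n)² e^{-T}` small
compared with `T`.
-/

open Real Finset

lemma mul_exp_neg_le_mul_exp_neg {s t : ℝ} (hs : 1 ≤ s) (hst : s ≤ t) :
    t * exp (-t) ≤ s * exp (-s) := by
  have ht : t ≤ s * exp (t - s) := by nlinarith [add_one_le_exp (t - s)]
  calc t * exp (-t) ≤ s * exp (t - s) * exp (-t) := by gcongr
    _ = s * exp (-s) := by rw [mul_assoc, ← exp_add]; ring_nf

lemma pow_four_mul_exp_neg_le_one {n : ℕ} {δ : ℝ} (hδ : 4 * log n ≤ δ) :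
    (n : ℝ) ^ 4 * exp (-δ) ≤ 1 := by
  rcases Nat.eq_zero_or_pos n with rfl | hn
  · simp
  have hpow : (n : ℝ) ^ 4 = exp (4 * log n) := by
    rw [show (4 : ℝ) * log n = log ((n : ℝ) ^ 4) by rw [log_pow]; norm_num,
      exp_log (by positivity)]
  rw [hpow, ← exp_add]
  exact exp_le_one_iff.mpr (by linarith)

section Softmax

variable {n : ℕ}

lemma softmaxVec_nonneg (z : Fin n → ℝ) (i : Fin n) : 0 ≤ softmaxVec z i :=
  div_nonneg (exp_pos _).le (sum_nonneg fun _ _ => (exp_pos _).le)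

lemma softmaxVec_le_exp_sub (z : Fin n → ℝ) (i j : Fin n) :
    softmaxVec z i ≤ exp (z i - z j) := by
  rw [exp_sub]
  exact div_le_div_of_nonneg_left (exp_pos _).le (exp_pos _)
    (single_le_sum (fun k _ => (exp_pos (z k)).le) (mem_univ j))

lemma sum_softmaxVec [NeZero n] (z : Fin n → ℝ) : ∑ i, softmaxVec z i = 1 := by
  simp only [softmaxVec, ← sum_div]
  exact div_self (sum_pos (fun i _ => exp_pos (z i)) univ_nonempty).ne'

lemma boltz_le_of_forall_le [NeZero n] {z : Fin n → ℝ} {M : ℝ} (hM : ∀ i, z i ≤ M) :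
    boltz z ≤ M :=
  calc boltz z ≤ ∑ i, M * softmaxVec z i :=
        sum_le_sum fun i _ => mul_le_mul_of_nonneg_right (hM i) (softmaxVec_nonneg z i)
    _ = M := by rw [← mul_sum, sum_softmaxVec, mul_one]

lemma sub_boltz_eq_sum (z : Fin n → ℝ) (i₀ : Fin n) :
    z i₀ - boltz z = ∑ i, (z i₀ - z i) * softmaxVec z i := by
  have := NeZero.of_pos i₀.pos
  simp only [boltz, sub_mul, sum_sub_distrib, ← mul_sum, sum_softmaxVec, mul_one]

lemma sub_boltz_le {δ : ℝ} (hδ : 1 ≤ δ) (z : Fin n → ℝ) (i₀ : Fin n)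
    (hgap : ∀ i, i ≠ i₀ → δ ≤ z i₀ - z i) :
    z i₀ - boltz z ≤ (n - 1) * (δ * exp (-δ)) := by
  have hterm : ∀ i ∈ univ.erase i₀, (z i₀ - z i) * softmaxVec z i ≤ δ * exp (-δ) := by
    intro i hi
    have hg := hgap i (ne_of_mem_erase hi)
    calc (z i₀ - z i) * softmaxVec z i ≤ (z i₀ - z i) * exp (-(z i₀ - z i)) := by
          rw [neg_sub]
          exact mul_le_mul_of_nonneg_left (softmaxVec_le_exp_sub z i i₀) (by linarith)
      _ ≤ δ * exp (-δ) := mul_exp_neg_le_mul_exp_neg hδ hg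
  rw [sub_boltz_eq_sum z i₀, ← add_sum_erase _ _ (mem_univ i₀), sub_self, zero_mul, zero_add]
  calc ∑ i ∈ univ.erase i₀, (z i₀ - z i) * softmaxVec z i
      ≤ ∑ _i ∈ univ.erase i₀, δ * exp (-δ) := sum_le_sum hterm
    _ = (n - 1) * (δ * exp (-δ)) := by
        rw [sum_const, nsmul_eq_mul, card_erase_of_mem (mem_univ i₀), card_univ, Fintype.card_fin,
          Nat.cast_sub i₀.pos]
        norm_num

end Softmax

lemma log_sq_mul_exp_neg_add_lt {n : ℕ} (hn : 2 ≤ n) {δ T : ℝ} (hδ : 4 * log n ≤ δ)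
    (hT : δ < T) :
    log n ^ 2 * exp (-T) + (n - 1) * (δ * exp (-δ)) < T := by
  have hn' : (2 : ℝ) ≤ n := by exact_mod_cast hn
  have hlog_pos : 0 < log n := log_pos (by linarith)
  have hlog_le : log n ≤ n - 1 := log_le_sub_one_of_pos (by positivity)
  have hδ_pos : 0 < δ := by linarith
  have hexp := pow_four_mul_exp_neg_le_one hδ
  have hexpT : exp (-T) ≤ exp (-δ) := exp_le_exp.mpr (by linarith)
  have hsq : log n ^ 2 ≤ (n - 1) * (δ / 4) := by nlinarith
  have hcoef : 5 / 4 * ((n : ℝ) - 1) < (n : ℝ) ^ 4 := by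
    have : (2 : ℝ) ^ 3 ≤ (n : ℝ) ^ 3 := by gcongr
    nlinarith
  calc log n ^ 2 * exp (-T) + (n - 1) * (δ * exp (-δ))
      ≤ (n - 1) * (δ / 4) * exp (-δ) + (n - 1) * (δ * exp (-δ)) := by
        gcongr
        exact (sq_nonneg _).trans hsq
    _ = 5 / 4 * ((n : ℝ) - 1) * exp (-δ) * δ := by ring
    _ < (n : ℝ) ^ 4 * exp (-δ) * δ := by gcongr
    _ ≤ δ := by nlinarith
    _ < T := hT

/-- for strictly decreasing, `δ`-gapped vectors `a, b` (with
`δ ≥ 4 ln n`, cross-separation `|a_i − b_j| > δ` whenever `a_i ≠ b_j`) and `a₁ > b₁`,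
`Boltz(a) − Boltz(b) > (ln n)² e^{−(a₁ − b₁)}`. -/
theorem boltz_sub_boltz_gt_of_all_diff {n : ℕ} (hn : 2 ≤ n) (δ : ℝ)
    (hδ : 4 * Real.log n ≤ δ) (a b : Fin n → ℝ)
    (hbdec : ∀ i j : Fin n, i < j → b i > b j)
    (hagap : ∀ i j : Fin n, i < j → a i - a j > δ)
    (hab : ∀ i j : Fin n, a i ≠ b j → |a i - b j| > δ)
    (h1 : a ⟨0, by omega⟩ > b ⟨0, by omega⟩) :
    boltz a - boltz b >
      Real.log n ^ 2 * Real.exp (-(a ⟨0, by omega⟩ - b ⟨0, by omega⟩)) := by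
  have : NeZero n := NeZero.of_pos (by omega)
  set i₀ : Fin n := ⟨0, by omega⟩
  have hlt : ∀ i, i ≠ i₀ → i₀ < i := fun i hi =>
    Fin.lt_def.mpr (Nat.pos_of_ne_zero fun h => hi (Fin.ext h))
  have hT : δ < a i₀ - b i₀ := by
    simpa [abs_of_pos (sub_pos.mpr h1)] using hab i₀ i₀ h1.ne'
  have hδ1 : 1 ≤ δ := by
    have := log_two_gt_d9
    have : log 2 ≤ log n := log_le_log two_pos (by exact_mod_cast hn)
    linarith
  have hb : boltz b ≤ b i₀ := boltz_le_of_forall_le fun i => by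
    rcases eq_or_ne i i₀ with rfl | hi
    · rfl
    · exact (hbdec i₀ i (hlt i hi)).le
  have ha := sub_boltz_le hδ1 a i₀ fun i hi => (hagap i₀ i (hlt i hi)).le
  linarith [log_sq_mul_exp_neg_add_lt hn hδ hT]
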